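/- Let A be a real symmetric positive semidefinite n×n matrix with eigenvalues λ₁ ≥ ⋯ ≥ λ_n, and let S be the span of the eigenvectors corresponding to the top ℓ = ⌈√n⌉ + 1 eigenvalues. Then tr(Π_S A) ≥ ‖A‖_F, where Π_S is the orthogonal projection onto S. -/

import Mathlib

/-! In the orthonormal eigenbasis, `tr(Π_S A) = λ₁ + ⋯ + λ_ℓ` and `‖A‖_F² = ∑ λᵢ²`. Squaring the
head sum produces `∑_{i ≤ ℓ} λᵢ²` plus `ℓ(ℓ - 1)` cross terms, each at least `λ_ℓ²`; since
`ℓ(ℓ - 1) ≥ ⌈√n⌉² ≥ n`, they pay for the tail `∑_{i > ℓ} λᵢ² ≤ n λ_ℓ²`. -/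

open Matrix

noncomputable def frob {m n : Type*} [Fintype m] [Fintype n] (A : Matrix m n ℝ) : ℝ :=
  Real.sqrt (∑ i, ∑ j, (A i j) ^ 2)

open Finset

theorem sum_sq_entries_eq_trace_mul_transpose {m n R : Type*} [Fintype m] [Fintype n]
    [CommSemiring R] (A : Matrix m n R) : ∑ i, ∑ j, A i j ^ 2 = trace (A * Aᵀ) := by
  simp only [trace, Matrix.diag, mul_apply, transpose_apply, sq]

section SpectralSum

variable {ι m R : Type*} [CommSemiring R] {v : ι → m → R}

theorem transpose_sum_smul_vecMulVec_self (s : Finset ι) (c : ι → R) :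
    (∑ i ∈ s, c i • vecMulVec (v i) (v i))ᵀ = ∑ i ∈ s, c i • vecMulVec (v i) (v i) := by
  simp only [transpose_sum, transpose_smul, transpose_vecMulVec]

variable [Fintype m]

theorem trace_sum_smul_vecMulVec_self (hnorm : ∀ i, v i ⬝ᵥ v i = 1) (s : Finset ι)
    (c : ι → R) : trace (∑ i ∈ s, c i • vecMulVec (v i) (v i)) = ∑ i ∈ s, c i := by
  simp only [trace_sum, trace_smul, trace_vecMulVec, hnorm, smul_eq_mul, mul_one]

variable [Fintype ι] [DecidableEq ι]

theorem sum_smul_vecMulVec_mul_sum_smul_vecMulVec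
    (horth : ∀ i j, v i ⬝ᵥ v j = if i = j then 1 else 0) (s : Finset ι) (a b : ι → R) :
    (∑ i ∈ s, a i • vecMulVec (v i) (v i)) * ∑ j, b j • vecMulVec (v j) (v j) =
      ∑ i ∈ s, (a i * b i) • vecMulVec (v i) (v i) := by
  rw [sum_mul]
  refine sum_congr rfl fun i _ => ?_
  rw [mul_sum, sum_eq_single i (fun j _ hji => ?_) (by simp)]
  · rw [smul_mul_smul_comm, vecMulVec_mul_vecMulVec, horth, if_pos rfl, one_smul]
  · rw [smul_mul_smul_comm, vecMulVec_mul_vecMulVec, horth, if_neg hji.symm, zero_smul,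
      vecMulVec_zero, smul_zero]

end SpectralSum

theorem sum_sq_add_mul_sq_le_sq_sum {ι : Type*} [DecidableEq ι] (f : ι → ℝ) (T : Finset ι)
    {μ : ℝ} (hμ : 0 ≤ μ) (hT : ∀ i ∈ T, μ ≤ f i) :
    ∑ i ∈ T, f i ^ 2 + #T * ((#T - 1) * μ ^ 2) ≤ (∑ i ∈ T, f i) ^ 2 := by
  have hterm : ∀ i ∈ T, f i ^ 2 + (#T - 1) * μ ^ 2 ≤ f i * ∑ j ∈ T, f j := by
    intro i hi
    have hrest : (#T - 1) * μ ≤ ∑ j ∈ T, f j - f i := by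
      rw [← sum_erase_eq_sub hi, ← cast_card_erase_of_mem hi, ← nsmul_eq_mul]
      exact card_nsmul_le_sum _ _ _ fun j hj => hT j (mem_of_mem_erase hj)
    have hcard : (1 : ℝ) ≤ #T := by exact_mod_cast card_pos.mpr ⟨i, hi⟩
    -- `f i * (∑ T f - f i) ≥ μ * ((#T - 1) * μ)`, multiplying `f i ≥ μ ≥ 0` with `hrest`
    nlinarith [hT i hi, mul_nonneg (sub_nonneg.mpr hcard) hμ]
  calc ∑ i ∈ T, f i ^ 2 + #T * ((#T - 1) * μ ^ 2)
      = ∑ i ∈ T, (f i ^ 2 + (#T - 1) * μ ^ 2) := by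
        rw [sum_add_distrib, sum_const, nsmul_eq_mul]
    _ ≤ ∑ i ∈ T, f i * ∑ j ∈ T, f j := sum_le_sum hterm
    _ = (∑ i ∈ T, f i) ^ 2 := by rw [← sum_mul, sq]

theorem sum_sq_le_card_mul_sq {ι : Type*} (f : ι → ℝ) (s : Finset ι) {μ : ℝ}
    (hs : ∀ i ∈ s, |f i| ≤ μ) : ∑ i ∈ s, f i ^ 2 ≤ #s * μ ^ 2 := by
  rw [← nsmul_eq_mul]
  refine sum_le_card_nsmul _ _ _ fun i hi => ?_
  obtain ⟨hlow, hhigh⟩ := abs_le.mp (hs i hi)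
  exact sq_le_sq' hlow hhigh

theorem sum_sq_le_sq_sum_of_separated {ι : Type*} [Fintype ι] [DecidableEq ι] (f : ι → ℝ)
    (T : Finset ι) {μ : ℝ} (hμ : 0 ≤ μ) (hT : ∀ i ∈ T, μ ≤ f i) (hTc : ∀ i ∉ T, |f i| ≤ μ)
    (hcard : (#Tᶜ : ℝ) ≤ #T * (#T - 1)) : ∑ i, f i ^ 2 ≤ (∑ i ∈ T, f i) ^ 2 := by
  have htail : ∑ i ∈ Tᶜ, f i ^ 2 ≤ #T * ((#T - 1) * μ ^ 2) :=
    calc ∑ i ∈ Tᶜ, f i ^ 2 ≤ #Tᶜ * μ ^ 2 :=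
          sum_sq_le_card_mul_sq f _ fun i hi => hTc i (mem_compl.mp hi)
      _ ≤ #T * ((#T - 1) * μ ^ 2) := by
          rw [← mul_assoc]; exact mul_le_mul_of_nonneg_right hcard (sq_nonneg μ)
  rw [← sum_add_sum_compl T]
  linarith [sum_sq_add_mul_sq_le_sq_sum f T hμ hT]

theorem le_ceil_sqrt_sq (x : ℝ) : x ≤ (⌈√x⌉₊ : ℝ) ^ 2 :=
  (Real.sqrt_le_left (Nat.cast_nonneg _)).mp (Nat.le_ceil _)

theorem sum_sq_le_sq_sum_val_lt {n ℓ : ℕ} {f : Fin n → ℝ} (hf : Antitone f)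
    (hf0 : ∀ i, 0 ≤ f i) (hℓ0 : 0 < ℓ) (hℓn : ℓ ≤ n) (hn : (n : ℝ) ≤ ℓ * (ℓ - 1)) :
    ∑ i, f i ^ 2 ≤ (∑ i ∈ univ.filter fun i : Fin n => (i : ℕ) < ℓ, f i) ^ 2 := by
  set T := univ.filter fun i : Fin n => (i : ℕ) < ℓ
  have hcard : #T = ℓ := by rw [Fin.card_filter_val_lt, min_eq_right hℓn]
  let last : Fin n := ⟨ℓ - 1, by omega⟩
  refine sum_sq_le_sq_sum_of_separated f T (μ := f last) (hf0 last) (fun i hi => ?_)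
    (fun i hi => ?_) ?_
  · have hiℓ : (i : ℕ) < ℓ := (mem_filter.mp hi).2
    exact hf (Fin.le_def.mpr (show (i : ℕ) ≤ ℓ - 1 by omega))
  · have hiℓ : ℓ ≤ (i : ℕ) := not_lt.mp fun h => hi (mem_filter.mpr ⟨mem_univ i, h⟩)
    rw [abs_of_nonneg (hf0 i)]
    exact hf (Fin.le_def.mpr (show ℓ - 1 ≤ (i : ℕ) by omega))
  · have hTc : (#Tᶜ : ℝ) ≤ n := by
      exact_mod_cast (card_le_univ Tᶜ).trans_eq (Fintype.card_fin n)
    simpa only [hcard] using hTc.trans hn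

/-- If A is real symmetric PSD with eigenvalues λ₁ ≥ ⋯ ≥ λ_n, eigenvectors v_i,
and Π_S is the projection onto the span of the top ℓ = ⌈√n⌉+1 eigenvectors,
then tr(Π_S A) ≥ ‖A‖_F. -/
theorem stmt5 (n : ℕ) (A : Matrix (Fin n) (Fin n) ℝ)
    (lam : Fin n → ℝ) (v : Fin n → (Fin n → ℝ))
    (horth : ∀ i j : Fin n, v i ⬝ᵥ v j = if i = j then 1 else 0)
    (hmono : ∀ i j : Fin n, i ≤ j → lam j ≤ lam i)
    (hnonneg : ∀ i : Fin n, 0 ≤ lam i)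
    (hA : A = ∑ i, lam i • Matrix.vecMulVec (v i) (v i))
    (ℓ : ℕ) (hℓ : ℓ = ⌈Real.sqrt n⌉₊ + 1) (hle : ℓ ≤ n)
    (P : Matrix (Fin n) (Fin n) ℝ)
    (hP : P = ∑ i ∈ Finset.univ.filter (fun i : Fin n => (i : ℕ) < ℓ),
        Matrix.vecMulVec (v i) (v i)) :
    frob A ≤ Matrix.trace (P * A) := by
  set T := univ.filter fun i : Fin n => (i : ℕ) < ℓ
  have hnorm : ∀ i, v i ⬝ᵥ v i = 1 := fun i => by simp [horth]
  have htrace : trace (P * A) = ∑ i ∈ T, lam i := by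
    have hP1 : P = ∑ i ∈ T, (1 : ℝ) • vecMulVec (v i) (v i) := by simp only [hP, one_smul]
    rw [hP1, hA, sum_smul_vecMulVec_mul_sum_smul_vecMulVec horth,
      trace_sum_smul_vecMulVec_self hnorm]
    simp only [one_mul]
  have hfrob : frob A = √(∑ i, lam i ^ 2) := by
    rw [frob, sum_sq_entries_eq_trace_mul_transpose, hA, transpose_sum_smul_vecMulVec_self,
      sum_smul_vecMulVec_mul_sum_smul_vecMulVec horth, trace_sum_smul_vecMulVec_self hnorm]
    simp only [sq]
  have hn : (n : ℝ) ≤ ℓ * (ℓ - 1) := by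
    have := le_ceil_sqrt_sq n
    rw [hℓ]
    push_cast
    nlinarith [(⌈√(n : ℝ)⌉₊).cast_nonneg (α := ℝ)]
  rw [htrace, hfrob, Real.sqrt_le_left (sum_nonneg fun i _ => hnonneg i)]
  exact sum_sq_le_sq_sum_val_lt (fun i j => hmono i j) hnonneg (by omega) hle hn
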